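/- arXiv:1903.03042 — 7 statements merged into one kernel-verified Lean document; each statement's English description precedes it below -/
import Mathlib

section
/- Let B be a skew-symmetric ℤ-valued bilinear form on a lattice N, and set π1(n) = B(n, ·) ∈ M = Hom(N, ℤ). Then for all n1, n2 ∈ N one has the bracket formula [z^{n1}∂_{π1(n1)}, z^{n2}∂_{π1(n2)}] = B(n1, n2) · z^{n1+n2} ∂_{π1(n1+n2)}. In particular, the k-submodule of derivations of k[N] spanned by the elements z^n ∂_{π1(n)}, n ∈ N, is closed under the commutator bracket, i.e., forms a Lie subalgebra. -/
/-! Both composites `D n₁ ∘ D n₂` and `D n₂ ∘ D n₁` send `z^p` to a multiple of `z^(n₁+n₂+p)`, so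
the bracket is a weighted shift whose weight is a difference of products of values of `B`;
expanding by bilinearity, skew-symmetry turns that weight into `B(n₁,n₂) · B(n₁+n₂, p)`. -/

open AddMonoidAlgebra

theorem LinearMap.skew_commutator_coeff {R N : Type*} [CommRing R] [AddCommGroup N] [Module R N]
    (B : N →ₗ[R] N →ₗ[R] R) (hB : ∀ a b : N, B a b = -B b a) (m n p : N) :
    B n p * B m (n + p) - B m p * B n (m + p) = B m n * B (m + n) p := by
  simp only [map_add, LinearMap.add_apply]
  rw [hB n m]
  ring

section WeightedShift

variable {k N : Type*} [CommRing k] [AddCommMonoid N]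
  {D : N → k[N] →ₗ[k] k[N]} {c : N → N → k}

theorem commutator_apply_single_one_of_weighted_shift
    (hD : ∀ n p : N, D n (single p 1) = c n p • single (n + p) 1) (m n p : N) :
    (D m ∘ₗ D n - D n ∘ₗ D m) (single p 1) =
      (c n p * c m (n + p) - c m p * c n (m + p)) • single (m + n + p) 1 := by
  simp only [LinearMap.sub_apply, LinearMap.comp_apply, hD, map_smul, smul_smul, sub_smul,
    add_left_comm n m p, add_assoc]

end WeightedShift

theorem skew_log_derivations_lie_subalgebra_general
    (k N : Type*) [CommRing k] [AddCommGroup N]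
    (B : N →ₗ[ℤ] N →ₗ[ℤ] ℤ) (hB : ∀ a b : N, B a b = - B b a)
    (D : N → (AddMonoidAlgebra k N →ₗ[k] AddMonoidAlgebra k N))
    (hD : ∀ n p : N, D n (AddMonoidAlgebra.single p 1) =
      ((B n p : ℤ) : k) • AddMonoidAlgebra.single (n + p) (1 : k))
    (n1 n2 : N) :
    (D n1 ∘ₗ D n2 - D n2 ∘ₗ D n1 = ((B n1 n2 : ℤ) : k) • D (n1 + n2)) ∧
    (D n1 ∘ₗ D n2 - D n2 ∘ₗ D n1 ∈ Submodule.span k (Set.range D)) := by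
  have bracket : D n1 ∘ₗ D n2 - D n2 ∘ₗ D n1 = ((B n1 n2 : ℤ) : k) • D (n1 + n2) := by
    refine (AddMonoidAlgebra.basis N k).ext fun p => ?_
    rw [basis_apply, commutator_apply_single_one_of_weighted_shift hD, LinearMap.smul_apply, hD,
      smul_smul]
    congr 1
    exact_mod_cast congrArg (Int.cast : ℤ → k) (B.skew_commutator_coeff hB n1 n2 p)
  exact ⟨bracket, bracket ▸ Submodule.smul_mem _ _ (Submodule.subset_span ⟨n1 + n2, rfl⟩)⟩

/-- For a skew-symmetric bilinear form `B` on a lattice `N` and `π1(n) = B(n,·)`,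
the derivations `z^n ∂_{π1(n)}` satisfy
`[z^{n1}∂_{π1(n1)}, z^{n2}∂_{π1(n2)}] = B(n1,n2)·z^{n1+n2}∂_{π1(n1+n2)}`;
in particular their span is closed under the commutator bracket. -/
theorem skew_log_derivations_lie_subalgebra
    (k N : Type*) [CommRing k] [AddCommGroup N] [Module.Free ℤ N] [Module.Finite ℤ N]
    (B : N →ₗ[ℤ] N →ₗ[ℤ] ℤ) (hB : ∀ a b : N, B a b = - B b a)
    (D : N → (AddMonoidAlgebra k N →ₗ[k] AddMonoidAlgebra k N))
    (hD : ∀ n p : N, D n (AddMonoidAlgebra.single p 1) =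
      ((B n p : ℤ) : k) • AddMonoidAlgebra.single (n + p) (1 : k))
    (n1 n2 : N) :
    (D n1 ∘ₗ D n2 - D n2 ∘ₗ D n1 = ((B n1 n2 : ℤ) : k) • D (n1 + n2)) ∧
    (D n1 ∘ₗ D n2 - D n2 ∘ₗ D n1 ∈ Submodule.span k (Set.range D)) :=
  skew_log_derivations_lie_subalgebra_general k N B hB D hD n1 n2
end

section
/- Let N be a lattice, u ∈ M = Hom(N, ℤ), and let f be an invertible element of the group algebra k[N] all of whose monomial exponents lie in the sublattice N_u := ker(u) ⊆ N (i.e., f ∈ k[N_u]^×). Then the k-linear map θ : k[N] → k[N] defined on monomials by θ(z^p) = z^p · f^{⟨u, p⟩} is a k-algebra automorphism of k[N], with inverse given by z^p ↦ z^p · f^{−⟨u, p⟩}. -/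
/-!
The map is the algebra homomorphism induced by the character `p ↦ z^p f^{u p}` of `N` with
values in the units of `k[N]`. Since `f` is supported on `ker u`, every wall-crossing map for `u`
fixes `f`, hence every power of `f`. Consequently the wall-crossing maps for `u` and `v` compose to
the one for `u + v`, and those for `u` and `-u` are mutually inverse.
-/

open AddMonoidAlgebra

namespace AddMonoidAlgebra

variable {k N : Type*} [CommSemiring k] [AddCommMonoid N]

noncomputable def wallCrossing (u : N →+ ℤ) (f : k[N]ˣ) : k[N] →ₐ[k] k[N] :=
  lift k k[N] N
    (of k N * (Units.coeHom k[N]).comp ((zpowersHom k[N]ˣ f).comp u.toMultiplicative))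

theorem wallCrossing_single (u : N →+ ℤ) (f : k[N]ˣ) (p : N) (c : k) :
    wallCrossing u f (single p c) = single p c * ((f ^ u p : k[N]ˣ) : k[N]) := by
  simp [wallCrossing, ← smul_mul_assoc]

theorem wallCrossing_apply_of_support (u : N →+ ℤ) (f : k[N]ˣ) {x : k[N]}
    (hx : ∀ n ∈ x.coeff.support, u n = 0) : wallCrossing u f x = x := by
  conv_rhs => rw [← sum_coeff_single x]
  rw [lift_unique]
  refine Finsupp.sum_congr fun n hn => ?_
  rw [wallCrossing_single, hx n hn, zpow_zero, Units.val_one, mul_one, smul_single', mul_one]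

theorem wallCrossing_units_zpow (u : N →+ ℤ) {f : k[N]ˣ}
    (hf : ∀ n ∈ (f : k[N]).coeff.support, u n = 0) (m : ℤ) :
    wallCrossing u f (f ^ m : k[N]ˣ) = (f ^ m : k[N]ˣ) := by
  have hfix : Units.map (wallCrossing u f : k[N] →* k[N]) f = f :=
    Units.ext (wallCrossing_apply_of_support u f hf)
  rw [← MonoidHom.coe_coe, ← Units.coe_map, map_zpow, hfix]

theorem wallCrossing_comp (u v : N →+ ℤ) {f : k[N]ˣ}
    (hf : ∀ n ∈ (f : k[N]).coeff.support, u n = 0) :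
    (wallCrossing u f).comp (wallCrossing v f) = wallCrossing (u + v) f := by
  refine algHom_ext (fun p => ?_) (Subsingleton.elim _ _)
  rw [AlgHom.comp_apply, wallCrossing_single, map_mul, wallCrossing_single,
    wallCrossing_units_zpow u hf, wallCrossing_single, mul_assoc, ← Units.val_mul, ← zpow_add,
    AddMonoidHom.add_apply]

theorem wallCrossing_zero (f : k[N]ˣ) : wallCrossing 0 f = AlgHom.id k k[N] :=
  algHom_ext (fun p => by simp [wallCrossing_single]) (Subsingleton.elim _ _)

end AddMonoidAlgebra

theorem wall_crossing_automorphism_general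
    (k N : Type*) [CommRing k] [AddCommGroup N]
    (u : N →+ ℤ) (f : (AddMonoidAlgebra k N)ˣ)
    (hf : ∀ n ∈ (f : AddMonoidAlgebra k N).coeff.support, u n = 0) :
    ∃ θ : AddMonoidAlgebra k N ≃ₐ[k] AddMonoidAlgebra k N,
      (∀ p : N, θ (AddMonoidAlgebra.single p 1) =
        AddMonoidAlgebra.single p (1 : k) *
          ((f ^ (u p) : (AddMonoidAlgebra k N)ˣ) : AddMonoidAlgebra k N)) ∧
      (∀ p : N, θ.symm (AddMonoidAlgebra.single p 1) =
        AddMonoidAlgebra.single p (1 : k) *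
          ((f ^ (-(u p)) : (AddMonoidAlgebra k N)ˣ) : AddMonoidAlgebra k N)) := by
  have hf_neg : ∀ n ∈ (f : k[N]).coeff.support, (-u) n = 0 := fun n hn => by simp [hf n hn]
  refine ⟨AlgEquiv.ofAlgHom (wallCrossing u f) (wallCrossing (-u) f) ?_ ?_,
    fun p => wallCrossing_single u f p 1, fun p => wallCrossing_single (-u) f p 1⟩
  · rw [wallCrossing_comp u (-u) hf, add_neg_cancel, wallCrossing_zero]
  · rw [wallCrossing_comp (-u) u hf_neg, neg_add_cancel, wallCrossing_zero]

/-- Wall-crossing automorphism: for `u ∈ Hom(N,ℤ)` and a unit `f` of `k[N]` supported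
on `ker u`, the map `z^p ↦ z^p f^{⟨u,p⟩}` is a `k`-algebra automorphism of `k[N]`
with inverse `z^p ↦ z^p f^{-⟨u,p⟩}`. -/
theorem wall_crossing_automorphism
    (k N : Type*) [CommRing k] [AddCommGroup N] [Module.Free ℤ N] [Module.Finite ℤ N]
    (u : N →+ ℤ) (f : (AddMonoidAlgebra k N)ˣ)
    (hf : ∀ n ∈ (f : AddMonoidAlgebra k N).coeff.support, u n = 0) :
    ∃ θ : AddMonoidAlgebra k N ≃ₐ[k] AddMonoidAlgebra k N,
      (∀ p : N, θ (AddMonoidAlgebra.single p 1) =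
        AddMonoidAlgebra.single p (1 : k) *
          ((f ^ (u p) : (AddMonoidAlgebra k N)ˣ) : AddMonoidAlgebra k N)) ∧
      (∀ p : N, θ.symm (AddMonoidAlgebra.single p 1) =
        AddMonoidAlgebra.single p (1 : k) *
          ((f ^ (-(u p)) : (AddMonoidAlgebra k N)ˣ) : AddMonoidAlgebra k N)) :=
  wall_crossing_automorphism_general k N u f hf
end

section
/- Let A be a commutative ring containing ℚ, let N be a lattice, u ∈ Hom(N, ℤ), and let g ∈ A be a nilpotent element. Define the derivation D of the group algebra A[N] by D(z^p) = ⟨u, p⟩ · g · z^p. Then D is a nilpotent derivation, exp(D) := Σ_{k≥0} D^k/k! is a well-defined ring automorphism of A[N], and for every p ∈ N one has exp(D)(z^p) = z^p · exp(g)^{⟨u, p⟩}, where exp(g) = Σ_{k≥0} g^k/k! is a unit in A. -/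
/-!
In the monomial basis `D` is diagonal, `D (z^p) = (⟨u, p⟩ • g) • z^p`, with eigenvalues additive
in `p`; this makes `D` a derivation, and nilpotent because `g` is. The exponential of a nilpotent
derivation is multiplicative, with inverse `exp (-D)`, and on the eigenvector `z^p` it acts by
`exp (⟨u, p⟩ • g) = exp(g) ^ ⟨u, p⟩`.
-/

namespace IsNilpotent

variable {A : Type*} [Ring A] [Module ℚ A]

theorem val_isUnit_exp_unit_zpow {a : A} (ha : IsNilpotent a) (m : ℤ) :
    ((ha.isUnit_exp.unit ^ m : Aˣ) : A) = exp (m • a) := by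
  induction m using Int.induction_on with
  | zero => simp
  | succ k ih =>
    rw [zpow_add_one, Units.val_mul, ih, IsUnit.unit_spec, add_smul, one_smul,
      ← exp_add_of_commute ((Commute.refl a).smul_left (k : ℤ)) (ha.smul (k : ℤ)) ha]
  | pred k ih =>
    rw [zpow_sub_one, Units.val_mul, ih,
      Units.inv_eq_of_mul_eq_one_right (exp_mul_exp_neg_self ha), sub_smul, one_smul,
      sub_eq_add_neg, ← exp_add_of_commute ((Commute.refl a).neg_right.smul_left (-k : ℤ))
        (ha.smul (-k : ℤ)) ha.neg]

end IsNilpotent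

namespace Module.End

section Eigenvector

variable {R M : Type*} [CommRing R] [AddCommGroup M] [Module R M]

theorem pow_apply_of_apply_eq_smul {f : Module.End R M} {r : R} {x : M} (hx : f x = r • x)
    (n : ℕ) : (f ^ n) x = r ^ n • x := by
  induction n with
  | zero => simp
  | succ n ih => rw [pow_succ', mul_apply, ih, map_smul, hx, smul_smul, pow_succ]

theorem exp_apply_of_apply_eq_smul [Module ℚ R] [Module ℚ M] {f : Module.End R M}
    (hf : IsNilpotent f) {r : R} (hr : IsNilpotent r) {x : M} (hx : f x = r • x) :
    IsNilpotent.exp f x = IsNilpotent.exp r • x := by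
  obtain ⟨k, hk⟩ := hf
  have hrk : (r ^ k) • x = 0 := by
    rw [← pow_apply_of_apply_eq_smul hx, hk, LinearMap.zero_apply]
  rw [IsNilpotent.exp_smul_eq_sum hrk hr, IsNilpotent.exp_eq_sum hk]
  simp [LinearMap.sum_apply, pow_apply_of_apply_eq_smul hx]

end Eigenvector

section Derivation

variable {R B : Type*} [CommRing R] [NonUnitalNonAssocRing B] [Module R B] [SMulCommClass R B B]
  [IsScalarTower R B B] [Module ℚ B]

noncomputable def expRingEquiv (D : B →ₗ[R] B) (h_der : ∀ x y, D (x * y) = x * D y + D x * y)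
    (h_nil : IsNilpotent D) : B ≃+* B where
  toFun x := IsNilpotent.exp D x
  invFun x := IsNilpotent.exp (-D) x
  left_inv := LinearMap.congr_fun h_nil.exp_neg_mul_exp_self
  right_inv := LinearMap.congr_fun h_nil.exp_mul_exp_neg_self
  map_mul' := exp_mul_of_derivation R B D h_der h_nil
  map_add' := map_add _

@[simp]
theorem coe_expRingEquiv (D : B →ₗ[R] B) (h_der : ∀ x y, D (x * y) = x * D y + D x * y)
    (h_nil : IsNilpotent D) : ⇑(expRingEquiv D h_der h_nil) = IsNilpotent.exp D :=
  rfl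

end Derivation

end Module.End

namespace AddMonoidAlgebra

variable {A N : Type*} [CommRing A] [AddMonoid N] {D : Module.End A (AddMonoidAlgebra A N)}

theorem apply_single_of_apply_single_one {χ : N → A}
    (hD : ∀ p, D (single p 1) = χ p • single p 1) (p : N) (a : A) :
    D (single p a) = χ p • single p a := by
  rw [← mul_one a, ← smul_single', map_smul, hD, smul_comm]

theorem pow_eq_zero_of_apply_single_one {χ : N → A}
    (hD : ∀ p, D (single p 1) = χ p • single p 1) {n : ℕ} (hχ : ∀ p, χ p ^ n = 0) :
    D ^ n = 0 := by
  refine lhom_ext' fun p => LinearMap.ext fun a => ?_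
  simp [Module.End.pow_apply_of_apply_eq_smul (apply_single_of_apply_single_one hD p a), hχ]

theorem apply_mul_of_apply_single_one {χ : N →+ A}
    (hD : ∀ p, D (single p 1) = χ p • single p 1) (x y : AddMonoidAlgebra A N) :
    D (x * y) = x * D y + D x * y := by
  induction x using induction_linear with
  | zero => simp
  | add x x' hx hx' => simp only [add_mul, map_add, hx, hx']; abel
  | single p a =>
    induction y using induction_linear with
    | zero => simp
    | add y y' hy hy' => simp only [mul_add, map_add, hy, hy']; abel
    | single q b =>
      simp only [single_mul_single, apply_single_of_apply_single_one hD, smul_single', map_add,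
        ← single_add]
      congr 1
      ring

end AddMonoidAlgebra

theorem exp_of_nilpotent_log_derivation_general
    (A N : Type*) [CommRing A] [Algebra ℚ A] [AddCommGroup N]
    (u : N →+ ℤ) (g : A) (hg : IsNilpotent g)
    (D : AddMonoidAlgebra A N →ₗ[A] AddMonoidAlgebra A N)
    (hD : ∀ p : N, D (AddMonoidAlgebra.single p 1) =
      (u p) • (g • AddMonoidAlgebra.single p (1 : A))) :
    ∃ M : ℕ, (D ^ M = 0) ∧
      ∃ (E : AddMonoidAlgebra A N ≃+* AddMonoidAlgebra A N) (v : Aˣ),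
        (∀ x, E x = ∑ i ∈ Finset.range M, ((i.factorial : ℚ)⁻¹) • ((D ^ i) x)) ∧
        ((v : A) = ∑ i ∈ Finset.range M, ((i.factorial : ℚ)⁻¹) • g ^ i) ∧
        (∀ p : N, E (AddMonoidAlgebra.single p 1) =
          ((v ^ (u p) : Aˣ) : A) • AddMonoidAlgebra.single p (1 : A)) := by
  have ⟨n, hn⟩ := hg
  let χ : N →+ A := (zmultiplesHom A g).comp u
  have hDχ (p : N) : D (AddMonoidAlgebra.single p 1) = χ p • AddMonoidAlgebra.single p 1 := by
    rw [hD, ← smul_assoc]; rfl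
  have hχ (p : N) : χ p ^ n = 0 := by
    change (u p • g) ^ n = 0
    rw [smul_pow, hn, smul_zero]
  have hDn : D ^ n = 0 := AddMonoidAlgebra.pow_eq_zero_of_apply_single_one hDχ hχ
  have hDnil : IsNilpotent D := ⟨n, hDn⟩
  have hDder := AddMonoidAlgebra.apply_mul_of_apply_single_one hDχ
  refine ⟨n, hDn, Module.End.expRingEquiv D hDder hDnil, hg.isUnit_exp.unit, fun x => ?_,
    IsNilpotent.exp_eq_sum hn, fun p => ?_⟩
  · simp [IsNilpotent.exp_eq_sum hDn, LinearMap.sum_apply]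
  · rw [Module.End.coe_expRingEquiv, hg.val_isUnit_exp_unit_zpow,
      Module.End.exp_apply_of_apply_eq_smul hDnil (hg.smul (u p)) (hDχ p)]

/-- For a nilpotent `g` in a commutative ℚ-algebra `A` and `u ∈ Hom(N,ℤ)`, the
derivation `D(z^p) = ⟨u,p⟩·g·z^p` of `A[N]` is nilpotent, `exp D` is a ring
automorphism, and `exp D (z^p) = exp(g)^{⟨u,p⟩}·z^p` where `exp g` is a unit of `A`. -/
theorem exp_of_nilpotent_log_derivation
    (A N : Type*) [CommRing A] [Algebra ℚ A] [AddCommGroup N]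
    [Module.Free ℤ N] [Module.Finite ℤ N]
    (u : N →+ ℤ) (g : A) (hg : IsNilpotent g)
    (D : AddMonoidAlgebra A N →ₗ[A] AddMonoidAlgebra A N)
    (hD : ∀ p : N, D (AddMonoidAlgebra.single p 1) =
      (u p) • (g • AddMonoidAlgebra.single p (1 : A))) :
    ∃ M : ℕ, (D ^ M = 0) ∧
      ∃ (E : AddMonoidAlgebra A N ≃+* AddMonoidAlgebra A N) (v : Aˣ),
        (∀ x, E x = ∑ i ∈ Finset.range M, ((i.factorial : ℚ)⁻¹) • ((D ^ i) x)) ∧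
        ((v : A) = ∑ i ∈ Finset.range M, ((i.factorial : ℚ)⁻¹) • g ^ i) ∧
        (∀ p : N, E (AddMonoidAlgebra.single p 1) =
          ((v ^ (u p) : Aˣ) : A) • AddMonoidAlgebra.single p (1 : A)) :=
  exp_of_nilpotent_log_derivation_general A N u g hg D hD
end

section
/- Let N be a finitely generated free abelian group, B : N × N → ℤ a bilinear form, and define π1, π2 : N → M := Hom(N, ℤ) by π1(n) = B(n, ·) and π2(n) = B(·, n). Assume the image π2(N) is saturated in M (i.e., M/π2(N) is torsion-free). Then the pairing π1(N) × π2(N) → ℤ given by (π1(n1), π2(n2)) ↦ B(n1, n2) is well-defined and perfect; equivalently, the induced map N/ker(π1) → Hom(π2(N), ℤ) is an isomorphism of abelian groups. -/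
/-!
Saturation makes `Dual ℤ N ⧸ π2(N)` a finitely generated torsion-free, hence free, hence
projective group, so `π2(N)` is a direct summand of `Dual ℤ N` and every functional on it extends
to `Dual ℤ N`. Since `N` is reflexive, that extension is evaluation at some `n : N`; thus
`n ↦ (p ↦ p n)` maps `N` onto `Dual ℤ π2(N)`, and its kernel is `ker π1`.
-/

open Module LinearMap

theorem Submodule.isTorsionFree_quotient_of_smul_mem {R M : Type*} [CommRing R] [IsDomain R]
    [AddCommGroup M] [Module R M] (P : Submodule R M)
    (hP : ∀ (m : M) (c : R), c ≠ 0 → c • m ∈ P → m ∈ P) : IsTorsionFree R (M ⧸ P) := by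
  refine isTorsionFree_iff_smul_eq_zero.mpr fun c x hcx => or_iff_not_imp_left.mpr fun hc => ?_
  induction x using Submodule.Quotient.induction_on with
  | H m =>
    rw [← Submodule.Quotient.mk_smul, Submodule.Quotient.mk_eq_zero] at hcx
    exact (Submodule.Quotient.mk_eq_zero P).mpr (hP m c hc hcx)

section Projective

variable {R M : Type*} [CommRing R] [AddCommGroup M] [Module R M]

theorem Submodule.exists_retraction_of_projective_quotient (P : Submodule R M)
    [Projective R (M ⧸ P)] : ∃ r : M →ₗ[R] P, r ∘ₗ P.subtype = LinearMap.id := by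
  obtain ⟨s, hs⟩ := P.mkQ.exists_rightInverse_of_surjective P.range_mkQ
  have hmem (x : M) : x - s (P.mkQ x) ∈ P := by
    rw [← Submodule.Quotient.mk_eq_zero, Submodule.Quotient.mk_sub, ← P.mkQ_apply (s _),
      ← LinearMap.comp_apply, hs, LinearMap.id_apply, P.mkQ_apply, sub_self]
  refine ⟨(LinearMap.id - s ∘ₗ P.mkQ).codRestrict P hmem, ?_⟩
  ext x
  simp [(Submodule.Quotient.mk_eq_zero P).mpr x.2]

theorem Submodule.dualRestrict_surjective_of_projective_quotient (P : Submodule R M)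
    [Projective R (M ⧸ P)] : Function.Surjective P.dualRestrict := by
  obtain ⟨r, hr⟩ := P.exists_retraction_of_projective_quotient
  refine fun f => ⟨f ∘ₗ r, ?_⟩
  rw [Submodule.dualRestrict_def, LinearMap.dualMap_apply', LinearMap.comp_assoc, hr,
    LinearMap.comp_id]

end Projective

namespace LinearMap

variable {R M N : Type*} [CommRing R] [AddCommGroup M] [Module R M] [AddCommGroup N] [Module R N]

def toDualRangeFlip (B : M →ₗ[R] N →ₗ[R] R) : M →ₗ[R] Dual R (range B.flip) :=
  (range B.flip).dualRestrict ∘ₗ Dual.eval R M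

@[simp]
theorem toDualRangeFlip_apply (B : M →ₗ[R] N →ₗ[R] R) (m : M) (n : N) :
    B.toDualRangeFlip m ⟨B.flip n, mem_range_self B.flip n⟩ = B m n :=
  rfl

theorem ker_toDualRangeFlip (B : M →ₗ[R] N →ₗ[R] R) : ker B.toDualRangeFlip = ker B := by
  ext m
  simp only [mem_ker]
  constructor
  · intro h
    ext n
    simpa using congr($h ⟨B.flip n, mem_range_self B.flip n⟩)
  · intro h
    ext ⟨_, n, rfl⟩
    exact congr($h n)

theorem toDualRangeFlip_surjective (B : M →ₗ[R] N →ₗ[R] R) [IsReflexive R M]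
    [Projective R (Dual R M ⧸ range B.flip)] : Function.Surjective B.toDualRangeFlip :=
  (range B.flip).dualRestrict_surjective_of_projective_quotient.comp
    (bijective_dual_eval R M).surjective

end LinearMap

/-- If `π2(N)` is saturated in `M = Hom(N,ℤ)`, then the pairing
`(π1(n1), π2(n2)) ↦ B(n1,n2)` is well-defined and perfect: the induced map
`N/ker(π1) → Hom(π2(N), ℤ)` is an isomorphism. Here `π1 = B`, `π2 = B.flip`. -/
theorem saturated_image_perfect_pairing
    (N : Type*) [AddCommGroup N] [Module.Free ℤ N] [Module.Finite ℤ N]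
    (B : N →ₗ[ℤ] N →ₗ[ℤ] ℤ)
    (hsat : ∀ (m : N →ₗ[ℤ] ℤ) (c : ℤ), c ≠ 0 →
      c • m ∈ LinearMap.range B.flip → m ∈ LinearMap.range B.flip) :
    ∃ e : (N ⧸ LinearMap.ker B) ≃ₗ[ℤ] (↥(LinearMap.range B.flip) →ₗ[ℤ] ℤ),
      ∀ n1 n2 : N,
        e (Submodule.Quotient.mk n1) ⟨B.flip n2, LinearMap.mem_range_self B.flip n2⟩ =
          B n1 n2 := by
  -- instance search turns this into `Projective` via `Module.free_of_finite_type_torsion_free'`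
  have : IsTorsionFree ℤ (Dual ℤ N ⧸ range B.flip) :=
    (range B.flip).isTorsionFree_quotient_of_smul_mem hsat
  refine ⟨Submodule.quotEquivOfEq _ _ B.ker_toDualRangeFlip.symm ≪≫ₗ
    B.toDualRangeFlip.quotKerEquivOfSurjective B.toDualRangeFlip_surjective, fun n1 n2 => ?_⟩
  exact B.toDualRangeFlip_apply n1 n2
end

section
/- With N, B, π1, π2, M as above and K1 := ker(π1), K2 := ker(π2), let λ : M → Hom(K1, ℤ) be the restriction map m ↦ m|_{K1}. If π2(N) is saturated in M, then the sequence 0 → K2 → N →^{π2} M →^{λ} Hom(K1, ℤ) → 0 is exact; in particular λ is surjective and ker(λ) = π2(N). -/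
open Matrix

-- helper 1: factor a functional through a map whose kernel it kills (field case)
private lemma factor_through {V W : Type*} [AddCommGroup V] [AddCommGroup W]
    [Module ℚ V] [Module ℚ W] (f : V →ₗ[ℚ] W) (φ : V →ₗ[ℚ] ℚ)
    (h : LinearMap.ker f ≤ LinearMap.ker φ) : ∃ ψ : W →ₗ[ℚ] ℚ, ∀ v, ψ (f v) = φ v := by
  obtain ⟨ψ, hψ⟩ := LinearMap.exists_extend
    (((LinearMap.ker f).liftQ φ h) ∘ₗ (f.quotKerEquivRange.symm.toLinearMap))
  refine ⟨ψ, fun v => ?_⟩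
  have h2 := LinearMap.congr_fun hψ ⟨f v, LinearMap.mem_range_self f v⟩
  simpa [LinearMap.quotKerEquivRange_symm_apply_image] using h2

private lemma den_clear {q : ℚ} {d : ℤ} (h : (q.den : ℤ) ∣ d) :
    ∃ z : ℤ, (d : ℚ) * q = (z : ℚ) := by
  obtain ⟨k, hk⟩ := h
  refine ⟨q.num * k, ?_⟩
  rw [hk]
  push_cast
  calc (q.den : ℚ) * k * q = ((q.den : ℚ) * q) * k := by ring
    _ = (q.num : ℚ) * k := by rw [Rat.den_mul_eq_num]

private lemma clear_denoms {ι : Type*} [Fintype ι] (v : ι → ℚ) :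
    ∃ (d : ℤ) (w : ι → ℤ), d ≠ 0 ∧ ∀ i, (d : ℚ) * v i = (w i : ℚ) := by
  have h : ∀ i, ∃ z : ℤ, ((∏ j, ((v j).den : ℤ) : ℤ) : ℚ) * v i = (z : ℚ) :=
    fun i => den_clear (Finset.dvd_prod_of_mem _ (Finset.mem_univ i))
  choose w hw using h
  refine ⟨_, w, ?_, hw⟩
  rw [Finset.prod_ne_zero_iff]
  intro i _
  exact_mod_cast (v i).den_nz


/-- If `π2(N)` is saturated in `M = Hom(N,ℤ)`, then with `λ : M → Hom(K1,ℤ)` the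
restriction map (`K1 = ker π1 = ker B`), the sequence
`0 → K2 → N → M → Hom(K1,ℤ) → 0` is exact: `λ` is surjective and
`ker λ = π2(N) = range B.flip`. -/
theorem four_term_exact_sequence
    (N : Type*) [AddCommGroup N] [Module.Free ℤ N] [Module.Finite ℤ N]
    (B : N →ₗ[ℤ] N →ₗ[ℤ] ℤ)
    (hsat : ∀ (m : N →ₗ[ℤ] ℤ) (c : ℤ), c ≠ 0 →
      c • m ∈ LinearMap.range B.flip → m ∈ LinearMap.range B.flip)
    (lam : (N →ₗ[ℤ] ℤ) →ₗ[ℤ] (↥(LinearMap.ker B) →ₗ[ℤ] ℤ))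
    (hlam : ∀ (m : N →ₗ[ℤ] ℤ) (x : ↥(LinearMap.ker B)), lam m x = m (x : N)) :
    Function.Surjective lam ∧ LinearMap.ker lam = LinearMap.range B.flip := by
  constructor
  · -- surjectivity
    set K := LinearMap.ker B with hK
    haveI : NoZeroSMulDivisors ℤ (N →ₗ[ℤ] ℤ) := by
      constructor
      intro c f h
      rcases eq_or_ne c 0 with hc | hc
      · exact Or.inl hc
      · refine Or.inr (LinearMap.ext fun x => ?_)
        have := LinearMap.congr_fun h x
        simp only [LinearMap.smul_apply, LinearMap.zero_apply, smul_eq_mul] at this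
        exact (mul_eq_zero.mp this).resolve_left hc
    haveI : Module.Free ℤ (N ⧸ K) := Module.Free.of_equiv B.quotKerEquivRange.symm
    obtain ⟨s, hs⟩ := Module.projective_lifting_property K.mkQ
      (LinearMap.id : (N ⧸ K) →ₗ[ℤ] (N ⧸ K)) K.mkQ_surjective
    intro f
    have hmem : ∀ x : N, x - s (K.mkQ x) ∈ K := by
      intro x
      rw [← Submodule.Quotient.mk_eq_zero]
      show K.mkQ _ = 0
      rw [map_sub]
      have := LinearMap.congr_fun hs (K.mkQ x)
      simp only [LinearMap.comp_apply, LinearMap.id_apply] at this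
      rw [this, sub_self]
    refine ⟨f ∘ₗ ((LinearMap.id - s ∘ₗ K.mkQ).codRestrict K (fun x => by simpa using hmem x)), ?_⟩
    refine LinearMap.ext fun x => ?_
    rw [hlam]
    simp only [LinearMap.comp_apply, LinearMap.codRestrict_apply]
    congr 1
    refine Subtype.ext ?_
    have hx0 : K.mkQ (x : N) = 0 := (Submodule.Quotient.mk_eq_zero K).mpr x.2
    simp [hx0]
  · apply le_antisymm
    · -- hard inclusion: ker lam ≤ range B.flip
      intro m hm
      have hm' : ∀ x : ↥(LinearMap.ker B), m (x : N) = 0 := by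
        intro x
        rw [← hlam m x, LinearMap.mem_ker.mp hm]
        rfl
      classical
      let b := Module.finBasis ℤ N
      let n := Module.finrank ℤ N
      let C : Matrix (Fin n) (Fin n) ℤ := fun i j => B (b i) (b j)
      let Cq : Matrix (Fin n) (Fin n) ℚ := C.map (fun k => (k : ℚ))
      let u : Fin n → ℤ := fun i => m (b i)
      let uq : Fin n → ℚ := fun i => (u i : ℚ)
      have hBx : ∀ (w : Fin n → ℤ) (i : Fin n), B (∑ j, w j • b j) (b i) = ∑ j, C j i * w j := by
        intro w i
        rw [map_sum]
        simp only [LinearMap.map_smul, LinearMap.sum_apply, LinearMap.smul_apply, smul_eq_mul]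
        exact Finset.sum_congr rfl fun j _ => mul_comm _ _
      have hmx : ∀ (w : Fin n → ℤ), m (∑ j, w j • b j) = ∑ j, u j * w j := by
        intro w
        rw [map_sum]
        simp only [LinearMap.map_smul, smul_eq_mul]
        exact Finset.sum_congr rfl fun j _ => mul_comm _ _
      -- Step 1 : uq kills ker of (Cqᵀ *ᵥ ·)
      have step1 : ∀ v : Fin n → ℚ, Cq.transpose *ᵥ v = 0 → uq ⬝ᵥ v = 0 := by
        intro v hv
        obtain ⟨d, w, hd, hw⟩ := clear_denoms v
        have hCw : ∀ i, ∑ j, C j i * w j = 0 := by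
          intro i
          have hcast : ((∑ j, C j i * w j : ℤ) : ℚ) = d * ((Cq.transpose *ᵥ v) i) := by
            push_cast
            simp only [Matrix.mulVec, dotProduct, Matrix.transpose_apply, Matrix.map_apply,
              Finset.mul_sum, Cq]
            refine Finset.sum_congr rfl fun j _ => ?_
            rw [← hw j]
            ring
          rw [hv] at hcast
          simp only [Pi.zero_apply, mul_zero] at hcast
          exact_mod_cast hcast
        have hxK : (∑ j, w j • b j) ∈ LinearMap.ker B := by
          rw [LinearMap.mem_ker]
          refine b.ext fun i => ?_
          rw [hBx w i, hCw i]
          rfl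
        have hmw : ∑ j, u j * w j = 0 := by rw [← hmx w]; exact hm' ⟨_, hxK⟩
        -- now conclude uq ⬝ᵥ v = 0
        have h2 : (d : ℚ) * (uq ⬝ᵥ v) = 0 := by
          have : (d : ℚ) * (uq ⬝ᵥ v) = ((∑ j, u j * w j : ℤ) : ℚ) := by
            push_cast
            simp only [dotProduct, Finset.mul_sum]
            refine Finset.sum_congr rfl fun j _ => ?_
            rw [← hw j]
            ring
          rw [this, hmw]
          norm_num
        rcases mul_eq_zero.mp h2 with h | h
        · exact absurd (by exact_mod_cast h) hd
        · exact h
      -- Step 2 : functional duality over ℚ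
      let φ : (Fin n → ℚ) →ₗ[ℚ] ℚ :=
        { toFun := fun v => uq ⬝ᵥ v
          map_add' := fun a c => by simp [dotProduct_add]
          map_smul' := fun r a => by simp [dotProduct_smul] }
      have hker : LinearMap.ker (Matrix.mulVecLin Cq.transpose) ≤ LinearMap.ker φ := by
        intro v hv
        rw [LinearMap.mem_ker] at hv ⊢
        rw [Matrix.mulVecLin_apply] at hv
        exact step1 v hv
      obtain ⟨ψ, hψ⟩ := factor_through (Matrix.mulVecLin Cq.transpose) φ hker
      let y : Fin n → ℚ := fun i => ψ (Pi.single i 1)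
      have hψy : ∀ v, ψ v = v ⬝ᵥ y := by
        intro v
        rw [LinearMap.pi_apply_eq_sum_univ]
        simp only [dotProduct, smul_eq_mul, y]
        refine Finset.sum_congr rfl fun x _ => ?_
        congr 2
        funext j
        simp [Pi.single_apply, eq_comm]
      have huy : ∀ v, uq ⬝ᵥ v = (Cq *ᵥ y) ⬝ᵥ v := by
        intro v
        have h1 := hψ v
        rw [hψy] at h1
        calc uq ⬝ᵥ v = φ v := rfl
          _ = (Cq.transpose *ᵥ v) ⬝ᵥ y := by rw [← h1]; simp [Matrix.mulVecLin_apply, Matrix.mulVec_transpose]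
          _ = (Cq *ᵥ y) ⬝ᵥ v := by
              rw [Matrix.mulVec_transpose, ← Matrix.dotProduct_mulVec, dotProduct_comm]
      have huy' : uq = Cq *ᵥ y := by
        funext i
        have := huy (Pi.single i 1)
        simpa [dotProduct_single] using this
      -- Step 3 : clear denominators and go back to ℤ
      obtain ⟨c, z, hc, hz⟩ := clear_denoms y
      have hCz : ∀ i, ∑ j, C i j * z j = c * u i := by
        intro i
        have hcast : ((∑ j, C i j * z j : ℤ) : ℚ) = ((c * u i : ℤ) : ℚ) := by
          push_cast
          have hr : (u i : ℚ) = uq i := rfl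
          rw [hr, huy']
          simp only [Matrix.mulVec, dotProduct, Matrix.map_apply, Finset.mul_sum, Cq]
          refine Finset.sum_congr rfl fun j _ => ?_
          rw [← hz j]
          ring
        exact_mod_cast hcast
      refine hsat m c hc ⟨∑ j, z j • b j, ?_⟩
      refine b.ext fun i => ?_
      rw [LinearMap.flip_apply]
      have : B (b i) (∑ j, z j • b j) = ∑ j, C i j * z j := by
        rw [map_sum]
        simp only [LinearMap.map_smul, smul_eq_mul]
        exact Finset.sum_congr rfl fun j _ => mul_comm _ _
      rw [this, hCz i]
      simp [u]
    · -- easy inclusion: range B.flip ≤ ker lam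
      rintro _ ⟨y, rfl⟩
      rw [LinearMap.mem_ker]
      refine LinearMap.ext fun x => ?_
      rw [hlam]
      have hx : B (x : N) = 0 := x.2
      simp [LinearMap.flip_apply, hx]
end

section
/- Let C ⊆ V be a closed convex cone in a finite-dimensional real vector space V and H : V → ℝ a linear functional with H(x) > 0 for all x ∈ C \ {0}. Then there exists a cone Ξ generated by finitely many rational vectors (with respect to a fixed lattice L with V = L ⊗ ℝ) such that C ⊆ Ξ and H(x) > 0 for all x ∈ Ξ \ {0}. -/
open Finset
noncomputable def sgn (b : Bool) : ℝ := if b then 1 else -1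

lemma sum_prod_bool {n : ℕ} (f : Fin n → Bool → ℝ) :
    ∑ s : Fin n → Bool, ∏ i, f i (s i) = ∏ i, (f i true + f i false) := by
  have h := Finset.prod_univ_sum (fun _ : Fin n => (Finset.univ : Finset Bool)) f
  rw [Fintype.piFinset_univ] at h
  rw [← h]
  exact Finset.prod_congr rfl fun i _ => by simp [Fintype.sum_bool]

lemma sum_prod_bool_mul {n : ℕ} (f : Fin n → Bool → ℝ) (j : Fin n) (g : Bool → ℝ) :
    ∑ s : Fin n → Bool, (∏ i, f i (s i)) * g (s j)
      = (f j true * g true + f j false * g false) *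
        ∏ i ∈ Finset.univ.erase j, (f i true + f i false) := by
  set F : Fin n → Bool → ℝ := fun i b => if i = j then f i b * g b else f i b with hF
  have hFj : ∀ b, F j b = f j b * g b := fun b => by simp [hF]
  have hFi : ∀ i, i ≠ j → ∀ b, F i b = f i b := fun i hi b => by simp [hF, hi]
  have h1 : ∀ s : Fin n → Bool, (∏ i, f i (s i)) * g (s j) = ∏ i, F i (s i) := by
    intro s
    have e1 := (Finset.mul_prod_erase univ (fun i => f i (s i)) (mem_univ j))
    have e2 := (Finset.mul_prod_erase univ (fun i => F i (s i)) (mem_univ j))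
    rw [← e1, ← e2]
    rw [hFj, Finset.prod_congr rfl (fun i hi => hFi i (Finset.mem_erase.mp hi).1 (s i))]
    ring
  rw [Finset.sum_congr rfl fun s _ => h1 s, sum_prod_bool F]
  rw [← Finset.mul_prod_erase univ (fun i => F i true + F i false) (mem_univ j)]
  rw [hFj, hFj]
  congr 1
  exact Finset.prod_congr rfl fun i hi =>
    by rw [hFi i (Finset.mem_erase.mp hi).1, hFi i (Finset.mem_erase.mp hi).1]

lemma cube_repr {n : ℕ} (u : Fin n → ℝ) (hu : ∀ i, |u i| ≤ 1) :
    ∃ a : (Fin n → Bool) → ℝ, (∀ s, 0 ≤ a s) ∧ (∑ s, a s = 1) ∧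
      (∀ j, ∑ s, a s * sgn (s j) = u j) := by
  refine ⟨fun s => ∏ i, (1 + sgn (s i) * u i) / 2, ?_, ?_, ?_⟩
  · intro s
    apply Finset.prod_nonneg
    intro i _
    have h := abs_le.mp (hu i)
    cases h' : s i <;> simp [sgn] <;> linarith
  · have h := sum_prod_bool (fun i b => (1 + sgn b * u i) / 2)
    rw [h]
    apply Finset.prod_eq_one
    intro i _
    simp [sgn]; ring
  · intro j
    have h := sum_prod_bool_mul (fun i b => (1 + sgn b * u i) / 2) j sgn
    rw [h]
    have h2 : ∀ i ∈ univ.erase j, ((1 + sgn true * u i) / 2 + (1 + sgn false * u i) / 2) = 1 := by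
      intro i _; simp [sgn]; ring
    rw [Finset.prod_congr rfl h2]
    simp [sgn]; ring

/-- A closed convex cone `C ⊆ ℝ^n` on which an integral linear functional `H` is
strictly positive away from `0` is contained in a rational polyhedral cone `Ξ`
(generated by finitely many rational vectors) on which `H` is still strictly
positive away from `0`. -/
theorem rational_polyhedral_cone_enlargement
    (n : ℕ) (C : Set (Fin n → ℝ))
    (hCsmul : ∀ x ∈ C, ∀ r : ℝ, 0 ≤ r → r • x ∈ C)
    (hCadd : ∀ x ∈ C, ∀ y ∈ C, x + y ∈ C)
    (hCclosed : IsClosed C)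
    (H : (Fin n → ℝ) →ₗ[ℝ] ℝ)
    (hHint : ∀ x : Fin n → ℤ, ∃ m : ℤ, H (fun i => (x i : ℝ)) = (m : ℝ))
    (hpos : ∀ x ∈ C, x ≠ 0 → 0 < H x) :
    ∃ (k : ℕ) (v : Fin k → (Fin n → ℝ)),
      (∀ i, ∀ j, ∃ q : ℚ, v i j = (q : ℝ)) ∧
      C ⊆ {x | ∃ c : Fin k → ℝ, (∀ i, 0 ≤ c i) ∧ x = ∑ i, c i • v i} ∧
      (∀ x ∈ {x | ∃ c : Fin k → ℝ, (∀ i, 0 ≤ c i) ∧ x = ∑ i, c i • v i},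
        x ≠ 0 → 0 < H x) := by
  by_cases hC0 : ∀ x ∈ C, x = 0
  · refine ⟨0, fun i => i.elim0, fun i => i.elim0, ?_, ?_⟩
    · intro x hx
      exact ⟨fun i => i.elim0, fun i => i.elim0, by rw [hC0 x hx]; simp⟩
    · rintro x ⟨c, -, rfl⟩ hx
      simp at hx
  · push_neg at hC0
    obtain ⟨x₀, hx₀C, hx₀⟩ := hC0
    have hx0pos := hpos x₀ hx₀C hx₀
    have hrep := LinearMap.pi_apply_eq_sum_univ H x₀
    have hsum_ne : ∑ i, x₀ i • H (fun j => if i = j then 1 else 0) ≠ 0 := by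
      rw [← hrep]; exact ne_of_gt hx0pos
    obtain ⟨i₀, -, hne⟩ := Finset.exists_ne_zero_of_sum_ne_zero hsum_ne
    obtain ⟨m, hm⟩ := hHint (fun j => if i₀ = j then 1 else 0)
    simp only [Int.cast_ite, Int.cast_one, Int.cast_zero] at hm
    have hmne : (m:ℝ) ≠ 0 := by
      intro h0
      apply hne
      rw [smul_eq_mul, hm, h0, mul_zero]
    set p : Fin n → ℝ := fun j => if i₀ = j then (m:ℝ)⁻¹ else 0 with hp
    have hpeq : p = (m:ℝ)⁻¹ • (fun j => if i₀ = j then (1:ℝ) else 0) := by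
      funext j; simp only [hp, Pi.smul_apply, smul_eq_mul]; split <;> simp
    have hHp : H p = 1 := by
      rw [hpeq, map_smul, hm, smul_eq_mul, inv_mul_cancel₀ hmne]
    -- compactness: lower bound for H on C against norm
    have hx₀n : ‖x₀‖ ≠ 0 := norm_ne_zero_iff.mpr hx₀
    have hz₀C : ‖x₀‖⁻¹ • x₀ ∈ C := hCsmul x₀ hx₀C _ (inv_nonneg.mpr (norm_nonneg _))
    have hz₀s : (‖x₀‖⁻¹ • x₀) ∈ Metric.sphere (0 : Fin n → ℝ) 1 := by
      rw [mem_sphere_zero_iff_norm, norm_smul, norm_inv, norm_norm, inv_mul_cancel₀ hx₀n]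
    have hKco : IsCompact (C ∩ Metric.sphere 0 1) := (isCompact_sphere 0 1).inter_left hCclosed
    obtain ⟨z, hzK, hzmin⟩ := hKco.exists_isMinOn ⟨_, hz₀C, hz₀s⟩
      H.continuous_of_finiteDimensional.continuousOn
    have hzne : z ≠ 0 := by
      intro h
      rw [h] at hzK
      have h1 := mem_sphere_zero_iff_norm.mp hzK.2
      simp at h1
    have hε : 0 < H z := hpos z hzK.1 hzne
    have hbound : ∀ x ∈ C, H z * ‖x‖ ≤ H x := by
      intro x hx
      rcases eq_or_ne x 0 with rfl | hxne
      · simp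
      · have hxn : (0:ℝ) < ‖x‖ := norm_pos_iff.mpr hxne
        have hmem : ‖x‖⁻¹ • x ∈ C ∩ Metric.sphere 0 1 :=
          ⟨hCsmul x hx _ (inv_nonneg.mpr (norm_nonneg _)), by
            rw [mem_sphere_zero_iff_norm, norm_smul, norm_inv, norm_norm,
              inv_mul_cancel₀ hxn.ne']⟩
        have h1 := isMinOn_iff.mp hzmin _ hmem
        rw [map_smul, smul_eq_mul] at h1
        have h2 : H z * ‖x‖ ≤ (‖x‖⁻¹ * H x) * ‖x‖ :=
          mul_le_mul_of_nonneg_right h1 (norm_nonneg x)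
        rwa [mul_comm (‖x‖⁻¹) (H x), mul_assoc, inv_mul_cancel₀ hxn.ne', mul_one] at h2
    have hH0 : ∀ x ∈ C, 0 ≤ H x := fun x hx =>
      le_trans (by positivity) (hbound x hx)
    obtain ⟨M, hM⟩ := exists_rat_gt (H z)⁻¹
    have hMpos : (0:ℝ) < M := lt_trans (inv_pos.mpr hε) hM
    have hxb : ∀ x ∈ C, ∀ j, |x j| ≤ (M:ℝ) * H x := by
      intro x hx j
      have h1 : |x j| ≤ ‖x‖ := by simpa [Real.norm_eq_abs] using norm_le_pi_norm x j
      have h2 : ‖x‖ ≤ H x / H z := (le_div_iff₀ hε).mpr (by linarith [hbound x hx])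
      have h3 : H x / H z ≤ (M:ℝ) * H x := by
        rw [div_eq_inv_mul]
        exact mul_le_mul_of_nonneg_right (le_of_lt hM) (hH0 x hx)
      linarith
    -- generators
    set sgnz : Bool → ℤ := fun b => if b then 1 else -1 with hsgnz
    choose ms hms using fun s : Fin n → Bool => hHint (fun j => sgnz (s j))
    have hcast2 : ∀ s : Fin n → Bool,
        (fun i => ((sgnz (s i) : ℤ) : ℝ)) = fun i => sgn (s i) := by
      intro s; funext i; cases s i <;> simp [sgn, hsgnz]
    set w : (Fin n → Bool) → Fin n → ℝ := fun s j => (M:ℝ) * sgn (s j) with hw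
    have hHw : ∀ s, H (w s) = (M:ℝ) * ms s := by
      intro s
      have h1 : w s = (M:ℝ) • fun i => sgn (s i) := by funext j; simp [hw]
      rw [h1, map_smul, ← hcast2 s, hms s, smul_eq_mul]
    set V : (Fin n → Bool) → Fin n → ℝ := fun s => w s + (1 - (M:ℝ) * ms s) • p with hV
    have hHV : ∀ s, H (V s) = 1 := by
      intro s
      rw [hV]
      simp only [map_add, map_smul, hHw s, hHp, smul_eq_mul]
      ring
    set e := Fintype.equivFin (Fin n → Bool) with he
    refine ⟨Fintype.card (Fin n → Bool), fun i => V (e.symm i), ?_, ?_, ?_⟩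
    · intro i j
      refine ⟨(M:ℚ) * (if (e.symm i) j then 1 else -1)
        + (1 - (M:ℚ) * ms (e.symm i)) * (if i₀ = j then (m:ℚ)⁻¹ else 0), ?_⟩
      simp only [hV, hw, hp, Pi.add_apply, Pi.smul_apply, smul_eq_mul, sgn]
      split <;> split <;> push_cast <;> ring
    · intro x hx
      rcases eq_or_ne x 0 with rfl | hxne
      · exact ⟨0, fun i => le_refl 0, by simp⟩
      · have hh : 0 < H x := hpos x hx hxne
        set u : Fin n → ℝ := fun j => x j / (H x * M) with hu
        have hub : ∀ j, |u j| ≤ 1 := by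
          intro j
          rw [hu]
          simp only []
          rw [abs_div, abs_of_pos (by positivity : (0:ℝ) < H x * M),
            div_le_one (by positivity)]
          calc |x j| ≤ (M:ℝ) * H x := hxb x hx j
            _ = H x * M := mul_comm _ _
        obtain ⟨a, ha0, ha1, haj⟩ := cube_repr u hub
        have hw_sum : ∑ s, (H x * a s) • w s = x := by
          funext j
          rw [Finset.sum_apply]
          simp only [Pi.smul_apply, smul_eq_mul, hw]
          calc ∑ s, (H x * a s) * ((M:ℝ) * sgn (s j))
              = (H x * M) * ∑ s, a s * sgn (s j) := by
                rw [Finset.mul_sum]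
                exact Finset.sum_congr rfl fun s _ => by ring
            _ = (H x * M) * u j := by rw [haj j]
            _ = x j := by
                rw [hu]
                exact mul_div_cancel₀ _ (by positivity)
        have hco : ∑ s, (H x * a s) * (1 - (M:ℝ) * ms s) = 0 := by
          have h1 : ∑ s, (H x * a s) * (1 - (M:ℝ) * ms s)
              = H x * (∑ s, a s) - ∑ s, (H x * a s) * H (w s) := by
            rw [Finset.mul_sum, ← Finset.sum_sub_distrib]
            exact Finset.sum_congr rfl fun s _ => by rw [hHw s]; ring
          have h2 : ∑ s, (H x * a s) * H (w s) = H (∑ s, (H x * a s) • w s) := by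
            rw [map_sum]
            exact Finset.sum_congr rfl fun s _ => by rw [map_smul, smul_eq_mul]
          rw [h1, h2, hw_sum, ha1]
          ring
        have key : ∑ s, (H x * a s) • V s = x := by
          have hsplit : ∀ s, (H x * a s) • V s
              = (H x * a s) • w s + ((H x * a s) * (1 - (M:ℝ) * ms s)) • p := by
            intro s; rw [hV]; rw [smul_add, smul_smul]
          rw [Finset.sum_congr rfl fun s _ => hsplit s, Finset.sum_add_distrib,
            ← Finset.sum_smul, hw_sum, hco, zero_smul, add_zero]
        refine ⟨fun i => H x * a (e.symm i), fun i => mul_nonneg hh.le (ha0 _), ?_⟩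
        rw [Fintype.sum_equiv e.symm (fun i => (H x * a (e.symm i)) • V (e.symm i))
          (fun s => (H x * a s) • V s) (fun i => rfl), key]
    · rintro x ⟨c, hc0, rfl⟩ hxne
      have hHx : H (∑ i, c i • V (e.symm i)) = ∑ i, c i := by
        rw [map_sum]
        exact Finset.sum_congr rfl fun i _ => by rw [map_smul, smul_eq_mul, hHV, mul_one]
      rcases lt_or_ge 0 (H (∑ i, c i • V (e.symm i))) with h | h
      · exact h
      · exfalso
        apply hxne
        have hz0 : ∑ i, c i = 0 := le_antisymm (hHx ▸ h)
          (Finset.sum_nonneg fun i _ => hc0 i)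
        have hall := (Finset.sum_eq_zero_iff_of_nonneg fun i _ => hc0 i).mp hz0
        exact Finset.sum_eq_zero fun i hi => by rw [hall i hi, zero_smul]
end

section
/- Let R be a commutative ring, A an R-module, and Tr : A → R an R-linear functional. Suppose *₁ and *₂ are two R-bilinear, commutative, associative multiplications on A such that (i) Tr(x *₁ y) = Tr(x *₂ y) for all x, y ∈ A, (ii) Tr(x *₁ y *₁ z) = Tr(x *₂ y *₂ z) for all x, y, z ∈ A, and (iii) the symmetric bilinear pairing ⟨x, y⟩ := Tr(x *₁ y) is nondegenerate in the sense that the induced map A → Hom_R(A, R) is injective. Then *₁ = *₂. -/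
/-- Two commutative associative `R`-bilinear multiplications on an `R`-module with
the same 2-point and 3-point trace functions coincide, provided the 2-point pairing
of the first multiplication is nondegenerate. -/
theorem trace_functions_determine_multiplication
    (R A : Type*) [CommRing R] [AddCommGroup A] [Module R A]
    (Tr : A →ₗ[R] R)
    (m1 m2 : A →ₗ[R] A →ₗ[R] A)
    (hcomm1 : ∀ x y : A, m1 x y = m1 y x)
    (hassoc1 : ∀ x y z : A, m1 (m1 x y) z = m1 x (m1 y z))
    (hcomm2 : ∀ x y : A, m2 x y = m2 y x)
    (hassoc2 : ∀ x y z : A, m2 (m2 x y) z = m2 x (m2 y z))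
    (h2 : ∀ x y : A, Tr (m1 x y) = Tr (m2 x y))
    (h3 : ∀ x y z : A, Tr (m1 x (m1 y z)) = Tr (m2 x (m2 y z)))
    (hnd : ∀ x : A, (∀ y : A, Tr (m1 x y) = 0) → x = 0) :
    m1 = m2 := by
  ext y z
  have key : m1 y z - m2 y z = 0 := by
    apply hnd
    intro w
    have : Tr (m1 (m1 y z) w) = Tr (m1 (m2 y z) w) := by
      rw [hcomm1 (m1 y z) w, hcomm1 (m2 y z) w, h3 w y z,
        h2 w (m2 y z)]
    simp [map_sub, this]
  exact sub_eq_zero.mp key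
end
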